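/- Complementary error function lower bound: for all x ≥ 0, erfc(x) ≥ √(γ − 1) · e^{−γx²}, where γ = √(2e/π). -/

import Mathlib

/-!
Write `e^{-γx²} = 2γ ∫_x^∞ t e^{-γt²} dt` and compare integrands. The inequality `e·s ≤ e^s` at
`s = 2(γ-1)t²` gives `√(2e(γ-1))·t ≤ e^{(γ-1)t²}`, i.e. `√(2e(γ-1))·t·e^{-γt²} ≤ e^{-t²}`.
Integrating over `(x, ∞)` gives `erfc x ≥ √(2e(γ-1)) / (γ√π) · e^{-γx²}` for every `γ > 1`, and
`γ = √(2e/π)` is exactly the value with `γ√π = √(2e)`, where the constant becomes `√(γ - 1)`.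
-/

open scoped Real

/-- The complementary error function erfc(x) = (2/√π)·∫_x^∞ e^{−t²} dt. -/
noncomputable def erfc (x : ℝ) : ℝ :=
  (2 / Real.sqrt π) * ∫ t in Set.Ioi x, Real.exp (-t ^ 2)

open MeasureTheory Filter Topology Real Set

theorem integral_Ioi_mul_exp_neg_mul_sq {b : ℝ} (hb : 0 < b) (x : ℝ) :
    ∫ t in Ioi x, t * exp (-b * t ^ 2) = exp (-b * x ^ 2) / (2 * b) := by
  have hderiv : ∀ t ∈ Ici x,
      HasDerivAt (fun t ↦ -(exp (-b * t ^ 2) / (2 * b))) (t * exp (-b * t ^ 2)) t := by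
    intro t _
    refine (((hasDerivAt_pow 2 t).const_mul (-b)).exp.div_const (2 * b)).neg.congr_deriv ?_
    field_simp
    norm_num [mul_comm]
  have hlim : Tendsto (fun t ↦ -(exp (-b * t ^ 2) / (2 * b))) atTop (𝓝 0) := by
    simpa using ((tendsto_exp_atBot.comp ((tendsto_pow_atTop two_ne_zero).const_mul_atTop_of_neg
      (neg_lt_zero.2 hb))).div_const (2 * b)).neg
  rw [integral_Ioi_of_hasDerivAt_of_tendsto' hderiv
    (integrable_mul_exp_neg_mul_sq hb).integrableOn hlim]
  ring

theorem sqrt_two_mul_exp_one_mul_mul_le_exp (a y : ℝ) :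
    √(2 * exp 1 * a) * y ≤ exp (a * y ^ 2) := by
  rcases lt_or_ge y 0 with hy | hy
  · exact (mul_nonpos_of_nonneg_of_nonpos (sqrt_nonneg _) hy.le).trans (exp_pos _).le
  calc √(2 * exp 1 * a) * y = √(exp 1 * (2 * a * y ^ 2)) := by
        rw [show exp 1 * (2 * a * y ^ 2) = 2 * exp 1 * a * y ^ 2 by ring,
          sqrt_mul' _ (sq_nonneg y), sqrt_sq hy]
    _ ≤ √(exp (2 * a * y ^ 2)) := sqrt_le_sqrt exp_one_mul_le_exp
    _ = exp (a * y ^ 2) := by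
        rw [show 2 * a * y ^ 2 = a * y ^ 2 + a * y ^ 2 by ring, exp_add, sqrt_mul_self (exp_pos _).le]

theorem exp_neg_mul_sq_le_integral_Ioi_exp_neg_sq {b : ℝ} (hb : 1 < b) (x : ℝ) :
    √(2 * exp 1 * (b - 1)) / (2 * b) * exp (-b * x ^ 2) ≤ ∫ t in Ioi x, exp (-t ^ 2) := by
  have hb0 : 0 < b := by linarith
  have hgauss : IntegrableOn (fun t ↦ exp (-t ^ 2)) (Ioi x) := by
    simpa using (integrable_exp_neg_mul_sq one_pos).integrableOn
  have hpt (t : ℝ) : √(2 * exp 1 * (b - 1)) * (t * exp (-b * t ^ 2)) ≤ exp (-t ^ 2) := by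
    calc √(2 * exp 1 * (b - 1)) * (t * exp (-b * t ^ 2))
        = √(2 * exp 1 * (b - 1)) * t * exp (-b * t ^ 2) := by ring
      _ ≤ exp ((b - 1) * t ^ 2) * exp (-b * t ^ 2) := by
          gcongr; exact sqrt_two_mul_exp_one_mul_mul_le_exp _ t
      _ = exp (-t ^ 2) := by rw [← exp_add]; ring_nf
  calc √(2 * exp 1 * (b - 1)) / (2 * b) * exp (-b * x ^ 2)
      = √(2 * exp 1 * (b - 1)) * ∫ t in Ioi x, t * exp (-b * t ^ 2) := by
        rw [integral_Ioi_mul_exp_neg_mul_sq hb0]; ring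
    _ = ∫ t in Ioi x, √(2 * exp 1 * (b - 1)) * (t * exp (-b * t ^ 2)) :=
        (integral_const_mul _ _).symm
    _ ≤ ∫ t in Ioi x, exp (-t ^ 2) :=
        integral_mono ((integrable_mul_exp_neg_mul_sq hb0).integrableOn.const_mul _)
          hgauss hpt

theorem one_lt_sqrt_two_mul_exp_one_div_pi : 1 < √(2 * exp 1 / π) := by
  rw [lt_sqrt zero_le_one, one_pow, one_lt_div pi_pos]
  linarith [exp_one_gt_d9, pi_lt_d2]

theorem stmt_12_general (x : ℝ) :
    erfc x ≥ Real.sqrt (Real.sqrt (2 * Real.exp 1 / π) - 1) *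
      Real.exp (-(Real.sqrt (2 * Real.exp 1 / π)) * x ^ 2) := by
  set γ := √(2 * exp 1 / π)
  have hγ : 1 < γ := one_lt_sqrt_two_mul_exp_one_div_pi
  have hγπ : γ * √π = √(2 * exp 1) := by
    rw [← sqrt_mul (by positivity), div_mul_cancel₀ _ pi_pos.ne']
  have hconst : 2 / √π * (√(2 * exp 1 * (γ - 1)) / (2 * γ)) = √(γ - 1) := by
    rw [sqrt_mul (by positivity), ← hγπ]
    field_simp
  rw [ge_iff_le, erfc, ← hconst, mul_assoc]
  gcongr
  exact exp_neg_mul_sq_le_integral_Ioi_exp_neg_sq hγ x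

/-- For all x ≥ 0, erfc(x) ≥ √(γ − 1)·e^{−γx²} where γ = √(2e/π). -/
theorem stmt_12 (x : ℝ) (hx : 0 ≤ x) :
    erfc x ≥ Real.sqrt (Real.sqrt (2 * Real.exp 1 / π) - 1) *
      Real.exp (-(Real.sqrt (2 * Real.exp 1 / π)) * x ^ 2) :=
  stmt_12_general x
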